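/- If a, b ∈ ℤ^g with (a,b) = Σ_i a_i b_i odd, then Θ((1/2)a + (1/2)τb, τ) = 0. That is, the theta function vanishes at every odd half-integer characteristic. -/
import Mathlib

open Complex

/-- The Riemann theta function. -/
noncomputable def RiemannTheta (g : ℕ) (τ : Matrix (Fin g) (Fin g) ℂ) (u : Fin g → ℂ) : ℂ :=
  ∑' n : Fin g → ℤ,
    Complex.exp (2 * Real.pi * Complex.I * (∑ i, (n i : ℂ) * u i)
      + Real.pi * Complex.I * (∑ i, ∑ j, (n i : ℂ) * τ i j * (n j : ℂ)))

private lemma exp_odd_pi_I {K : ℤ} (hK : Odd K) :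
    Complex.exp (Real.pi * Complex.I * K) = -1 := by
  obtain ⟨m, rfl⟩ := hK
  push_cast
  rw [show ((Real.pi : ℂ) * Complex.I * (2 * m + 1))
      = m * (2 * Real.pi * Complex.I) + Real.pi * Complex.I by ring,
    Complex.exp_add, Complex.exp_int_mul_two_pi_mul_I, Complex.exp_pi_mul_I, one_mul]

/-- The theta function vanishes at every odd half-integer characteristic:
if `a, b ∈ ℤ^g` with `Σᵢ aᵢ bᵢ` odd, then `Θ(a/2 + τb/2, τ) = 0`. -/
theorem riemannTheta_odd_char_eq_zero (g : ℕ) (τ : Matrix (Fin g) (Fin g) ℂ)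
    (hsymm : τ.IsSymm)
    (hpos : (Matrix.of fun i j => (τ i j).im).PosDef)
    (a b : Fin g → ℤ) (hodd : Odd (∑ i, a i * b i)) :
    RiemannTheta g τ
      (fun i => (a i : ℂ) / 2 + (∑ j, τ i j * (b j : ℂ)) / 2) = 0 := by
  set u : Fin g → ℂ := fun i => (a i : ℂ) / 2 + (∑ j, τ i j * (b j : ℂ)) / 2 with hu
  set F : (Fin g → ℤ) → ℂ := fun n =>
    Complex.exp (2 * Real.pi * Complex.I * (∑ i, (n i : ℂ) * u i)
      + Real.pi * Complex.I * (∑ i, ∑ j, (n i : ℂ) * τ i j * (n j : ℂ))) with hF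
  set L : (Fin g → ℤ) → ℂ := fun n => ∑ i, (n i : ℂ) * (a i : ℂ) with hL
  set P : (Fin g → ℤ) → (Fin g → ℤ) → ℂ :=
    fun x y => ∑ i, ∑ j, (x i : ℂ) * τ i j * (y j : ℂ) with hP
  have hLsub : ∀ n : Fin g → ℤ, L (-n - b) = -L n - L b := by
    intro n
    simp only [hL, Pi.sub_apply, Pi.neg_apply, Int.cast_sub, Int.cast_neg,
      ← Finset.sum_sub_distrib, ← Finset.sum_neg_distrib]
    exact Finset.sum_congr rfl fun i _ => by ring
  have hPl : ∀ n y : Fin g → ℤ, P (-n - b) y = -P n y - P b y := by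
    intro n y
    simp only [hP, Pi.sub_apply, Pi.neg_apply, Int.cast_sub, Int.cast_neg,
      ← Finset.sum_sub_distrib, ← Finset.sum_neg_distrib]
    exact Finset.sum_congr rfl fun i _ =>
      Finset.sum_congr rfl fun j _ => by ring
  have hPr : ∀ n y : Fin g → ℤ, P y (-n - b) = -P y n - P y b := by
    intro n y
    simp only [hP, Pi.sub_apply, Pi.neg_apply, Int.cast_sub, Int.cast_neg,
      ← Finset.sum_sub_distrib, ← Finset.sum_neg_distrib]
    exact Finset.sum_congr rfl fun i _ =>
      Finset.sum_congr rfl fun j _ => by ring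
  have hPsymm : ∀ x y : Fin g → ℤ, P x y = P y x := by
    intro x y
    simp only [hP]
    rw [Finset.sum_comm]
    exact Finset.sum_congr rfl fun j _ => Finset.sum_congr rfl fun i _ => by
      rw [← hsymm.apply i j]; ring
  have hlin : ∀ n : Fin g → ℤ, (2 : ℂ) * (∑ i, (n i : ℂ) * u i) = L n + P n b := by
    intro n
    simp only [hL, hP, hu, Finset.mul_sum, ← Finset.sum_add_distrib]
    refine Finset.sum_congr rfl fun i _ => ?_
    rw [show (2 : ℂ) * ((n i : ℂ) * ((a i : ℂ) / 2 + (∑ j, τ i j * (b j : ℂ)) / 2))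
        = (n i : ℂ) * (a i : ℂ) + (n i : ℂ) * ∑ j, τ i j * (b j : ℂ) by ring,
      Finset.mul_sum]
    exact congrArg _ (Finset.sum_congr rfl fun j _ => (mul_assoc _ _ _).symm)
  have key : ∀ n : Fin g → ℤ, F (-n - b) = -F n := by
    intro n
    set K : ℤ := -(∑ i, a i * b i) - 2 * (∑ i, n i * a i) with hK
    have hKodd : Odd K := (hodd.neg).sub_even (even_two_mul _)
    have hLb : L b = ∑ i, (a i : ℂ) * b i := by
      simp only [hL]; exact Finset.sum_congr rfl fun i _ => by ring
    have hab : (K : ℂ) = -(∑ i, (a i : ℂ) * b i) - 2 * L n := by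
      simp only [hK, hL]; push_cast; ring_nf
    have hexp : (2 * (Real.pi : ℂ) * Complex.I * (∑ i, ((-n - b) i : ℂ) * u i)
        + Real.pi * Complex.I * (∑ i, ∑ j, ((-n - b) i : ℂ) * τ i j * ((-n - b) j : ℂ)))
        = (2 * Real.pi * Complex.I * (∑ i, (n i : ℂ) * u i)
        + Real.pi * Complex.I * (∑ i, ∑ j, (n i : ℂ) * τ i j * (n j : ℂ)))
        + Real.pi * Complex.I * K := by
      have e1 : (∑ i, ∑ j, ((-n - b) i : ℂ) * τ i j * ((-n - b) j : ℂ)) = P (-n-b) (-n-b) := rfl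
      have e2 : (∑ i, ∑ j, (n i : ℂ) * τ i j * (n j : ℂ)) = P n n := rfl
      rw [e1, e2, hPl, hPr, hPr, hPsymm b n,
        show (2 : ℂ) * Real.pi * Complex.I * (∑ i, ((-n - b) i : ℂ) * u i)
          = Real.pi * Complex.I * (2 * (∑ i, ((-n - b) i : ℂ) * u i)) by ring,
        show (2 : ℂ) * Real.pi * Complex.I * (∑ i, (n i : ℂ) * u i)
          = Real.pi * Complex.I * (2 * (∑ i, (n i : ℂ) * u i)) by ring,
        hlin, hlin, hLsub, hPl, hab, hLb]
      ring
    calc F (-n - b) = Complex.exp ((2 * Real.pi * Complex.I * (∑ i, (n i : ℂ) * u i)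
        + Real.pi * Complex.I * (∑ i, ∑ j, (n i : ℂ) * τ i j * (n j : ℂ)))
        + Real.pi * Complex.I * K) := by rw [hF]; exact congrArg _ hexp
    _ = F n * Complex.exp (Real.pi * Complex.I * K) := by rw [Complex.exp_add]
    _ = -F n := by rw [exp_odd_pi_I hKodd]; ring
  have hinv : Function.Involutive (fun n : Fin g → ℤ => -n - b) := by
    intro n; funext i; simp
  have heq := Equiv.tsum_eq hinv.toPerm F
  simp only [Function.Involutive.coe_toPerm, key, tsum_neg] at heq
  have hS : RiemannTheta g τ u = ∑' n, F n := rfl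
  rw [hS]
  have := add_self_eq_zero.mp (by linear_combination -heq)
  exact this
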